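/- arXiv:1009.6163 — 3 statements merged into one kernel-verified Lean document; each statement's English description precedes it below -/
import Mathlib

section
/- Let γ > 0 and let L(n) : B^γ → X (n ≥ 0) be bounded linear operators. Then the following are equivalent: (i) the homogeneous system x(n+1) = L(n)x_n is uniformly exponentially stable in X with respect to B^γ; (ii) it is uniformly exponentially stable in B^γ; (iii) the first order system y(n+1) = D(n)y(n) in the Banach space B^γ is uniformly exponentially stable. -/
open scoped ENNReal
open MeasureTheory

namespace BP

variable {X : Type*} [NormedAddCommGroup X] [NormedSpace ℝ X] [CompleteSpace X]

/-- Weighted coordinate size: index `k : ℕ` represents the coordinate `−k ≤ 0`,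
so the weight `e^{γ m}` becomes `e^{−γ k}`. -/
noncomputable def wnorm (γ : ℝ) (φ : ℕ → X) (k : ℕ) : ℝ := ‖φ k‖ * Real.exp (-(γ * k))

/-- Membership in the phase space `B^γ`. -/
def MemB (γ : ℝ) (φ : ℕ → X) : Prop := BddAbove (Set.range (wnorm γ φ))

/-- The `B^γ` norm `|φ|_{B^γ} = sup_{m ≤ 0} ‖φ(m)‖ e^{γ m}`. -/
noncomputable def Bnorm (γ : ℝ) (φ : ℕ → X) : ℝ := ⨆ k, wnorm γ φ k

/-- The history `x_n` of `x : ℤ → X` at time `n` : coordinate `−k` is `x (n − k)`. -/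
def hist (x : ℤ → X) (n : ℤ) : ℕ → X := fun k => x (n - k)

/-- `x = x(·, τ, φ; f)` is the solution of `x(n+1) = L(n) x_n + f(n)` (`n ≥ τ`), `x_τ = φ`. -/
def IsSolution (L : ℕ → ((ℕ → X) →ₗ[ℝ] X)) (f : ℕ → X) (τ : ℕ) (φ : ℕ → X)
    (x : ℤ → X) : Prop :=
  (∀ k : ℕ, x ((τ : ℤ) - k) = φ k) ∧
  (∀ n : ℕ, τ ≤ n → x ((n : ℤ) + 1) = L n (hist x (n : ℤ)) + f n)

/-- Restriction of `x : ℤ → X` to `ℤ≥0`. -/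
def restrict (x : ℤ → X) : ℕ → X := fun n => x (n : ℤ)

/-- The `ℓ^p(ℤ≥0, X)` norm (valued in `ℝ≥0∞`). -/
noncomputable def lpNorm (p : ℝ≥0∞) {E : Type*} [NormedAddCommGroup E] (f : ℕ → E) : ℝ≥0∞ :=
  eLpNorm f p Measure.count

/-- `L(n)` is a bounded operator from `B^γ` to `X`. -/
def OpBounded (γ : ℝ) (T : (ℕ → X) →ₗ[ℝ] X) : Prop :=
  ∃ C : ℝ, ∀ φ : ℕ → X, MemB γ φ → ‖T φ‖ ≤ C * Bnorm γ φ

/-- The projection `P_{[−∞,−j]}` : keeps coordinates `−k` with `k ≥ j`. -/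
def Ptail (j : ℕ) : (ℕ → X) →ₗ[ℝ] (ℕ → X) where
  toFun φ := fun k => if j ≤ k then φ k else 0
  map_add' φ ψ := by funext k; by_cases h : j ≤ k <;> simp [h]
  map_smul' c φ := by funext k; by_cases h : j ≤ k <;> simp [h]

/-- The projection `P_{[−j,0]}` : keeps coordinates `−k` with `k ≤ j`. -/
def Phead (j : ℕ) : (ℕ → X) →ₗ[ℝ] (ℕ → X) where
  toFun φ := fun k => if k ≤ j then φ k else 0
  map_add' φ ψ := by funext k; by_cases h : k ≤ j <;> simp [h]
  map_smul' c φ := by funext k; by_cases h : k ≤ j <;> simp [h]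

/-- `E_{−j} : X → B^γ`, placing `ψ` at coordinate `−j`. -/
def Ecoord (j : ℕ) : X →ₗ[ℝ] (ℕ → X) where
  toFun ψ := fun k => if k = j then ψ else 0
  map_add' ψ χ := by funext k; by_cases h : k = j <;> simp [h]
  map_smul' c ψ := by funext k; by_cases h : k = j <;> simp [h]

/-- The backward shift `S`. -/
def shiftS : (ℕ → X) →ₗ[ℝ] (ℕ → X) where
  toFun φ := fun k => if k = 0 then 0 else φ (k - 1)
  map_add' φ ψ := by funext k; by_cases h : k = 0 <;> simp [h]
  map_smul' c φ := by funext k; by_cases h : k = 0 <;> simp [h]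

/-- `D(n) = E₀ ∘ L(n) + S`. -/
def Dop (L : ℕ → ((ℕ → X) →ₗ[ℝ] X)) (n : ℕ) : (ℕ → X) →ₗ[ℝ] (ℕ → X) :=
  (Ecoord 0).comp (L n) + shiftS

/-- `h = H g`, `h(n) = Σ_{k=0}^{n−1} S^{n−k−1} (I − P₀) g(k)`. -/
noncomputable def Hop (g : ℕ → (ℕ → X)) : ℕ → (ℕ → X) :=
  fun n => ∑ k ∈ Finset.range n,
    ((shiftS ^ (n - k - 1) : (ℕ → X) →ₗ[ℝ] (ℕ → X))
      ((LinearMap.id - Phead 0 : (ℕ → X) →ₗ[ℝ] (ℕ → X)) (g k)))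

/-- `(ℓ^p, ℓ^q)`-stability of the nonhomogeneous system. -/
def lplqStable (L : ℕ → ((ℕ → X) →ₗ[ℝ] X)) (p q : ℝ≥0∞) : Prop :=
  ∀ f : ℕ → X, lpNorm p f < ∞ → ∀ x : ℤ → X, IsSolution L f 0 0 x →
    lpNorm q (restrict x) < ∞

/-- Uniform exponential stability in `X` w.r.t. `B^γ`. -/
def UESinX (γ : ℝ) (L : ℕ → ((ℕ → X) →ₗ[ℝ] X)) : Prop :=
  ∃ K : ℝ, 1 ≤ K ∧ ∃ ν : ℝ, 0 < ν ∧
    ∀ (τ : ℕ) (φ : ℕ → X), MemB γ φ → ∀ x : ℤ → X, IsSolution L 0 τ φ x →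
      ∀ n : ℕ, τ ≤ n → ‖x (n : ℤ)‖ ≤ K * Real.exp (-(ν * ((n : ℝ) - (τ : ℝ)))) * Bnorm γ φ

/-- Uniform exponential stability in `B^γ`. -/
def UESinB (γ : ℝ) (L : ℕ → ((ℕ → X) →ₗ[ℝ] X)) : Prop :=
  ∃ K : ℝ, 1 ≤ K ∧ ∃ ν : ℝ, 0 < ν ∧
    ∀ (τ : ℕ) (φ : ℕ → X), MemB γ φ → ∀ x : ℤ → X, IsSolution L 0 τ φ x →
      ∀ n : ℕ, τ ≤ n →
        Bnorm γ (hist x (n : ℤ)) ≤ K * Real.exp (-(ν * ((n : ℝ) - (τ : ℝ)))) * Bnorm γ φ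

/-- Uniform stability in `X` w.r.t. `B^γ`. -/
def USinX (γ : ℝ) (L : ℕ → ((ℕ → X) →ₗ[ℝ] X)) : Prop :=
  ∃ K : ℝ, 1 ≤ K ∧
    ∀ (τ : ℕ) (φ : ℕ → X), MemB γ φ → ∀ x : ℤ → X, IsSolution L 0 τ φ x →
      ∀ n : ℕ, τ ≤ n → ‖x (n : ℤ)‖ ≤ K * Bnorm γ φ

/-- Uniform stability in `B^γ`. -/
def USinB (γ : ℝ) (L : ℕ → ((ℕ → X) →ₗ[ℝ] X)) : Prop :=
  ∃ K : ℝ, 1 ≤ K ∧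
    ∀ (τ : ℕ) (φ : ℕ → X), MemB γ φ → ∀ x : ℤ → X, IsSolution L 0 τ φ x →
      ∀ n : ℕ, τ ≤ n → Bnorm γ (hist x (n : ℤ)) ≤ K * Bnorm γ φ

/-- Condition (★): there exists `m ≤ 0` (here `m = −j`, `j : ℕ`) such that
`sup_{n ≥ 0} ‖L(n) P_{[−∞,m]}‖_{B^γ→X} < ∞`. -/
def StarCond (γ : ℝ) (L : ℕ → ((ℕ → X) →ₗ[ℝ] X)) : Prop :=
  ∃ (j : ℕ) (C : ℝ), ∀ (n : ℕ) (φ : ℕ → X), MemB γ φ → ‖L n (Ptail j φ)‖ ≤ C * Bnorm γ φ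

/-- `z` solves the first order system `z(n+1) = A(n) z(n)` (`n ≥ τ`), `z(τ) = ψ`. -/
def IsFOSol (A : ℕ → ((ℕ → X) →ₗ[ℝ] (ℕ → X))) (τ : ℕ) (ψ : ℕ → X)
    (z : ℕ → (ℕ → X)) : Prop :=
  z τ = ψ ∧ ∀ n : ℕ, τ ≤ n → z (n + 1) = A n (z n)

/-- Uniform exponential stability of the first order system in `B^γ`. -/
def FOUES (γ : ℝ) (A : ℕ → ((ℕ → X) →ₗ[ℝ] (ℕ → X))) : Prop :=
  ∃ K : ℝ, 1 ≤ K ∧ ∃ ν : ℝ, 0 < ν ∧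
    ∀ (τ : ℕ) (ψ : ℕ → X), MemB γ ψ → ∀ z : ℕ → (ℕ → X), IsFOSol A τ ψ z →
      ∀ n : ℕ, τ ≤ n →
        Bnorm γ (z n) ≤ K * Real.exp (-(ν * ((n : ℝ) - (τ : ℝ)))) * Bnorm γ ψ

/-- Uniform stability of the first order system in `B^γ`. -/
def FOUS (γ : ℝ) (A : ℕ → ((ℕ → X) →ₗ[ℝ] (ℕ → X))) : Prop :=
  ∃ K : ℝ, 1 ≤ K ∧
    ∀ (τ : ℕ) (ψ : ℕ → X), MemB γ ψ → ∀ z : ℕ → (ℕ → X), IsFOSol A τ ψ z →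
      ∀ n : ℕ, τ ≤ n → Bnorm γ (z n) ≤ K * Bnorm γ ψ

/-- The associated subdiagonal system: `L_sub(0) = 0`, `L_sub(n) = L(n) P_{[−n+1,0]}`. -/
def Lsub (L : ℕ → ((ℕ → X) →ₗ[ℝ] X)) : ℕ → ((ℕ → X) →ₗ[ℝ] X) :=
  fun n => if n = 0 then 0 else (L n).comp (Phead (n - 1))

/-- The system has bounded delay of order `d`. -/
def BoundedDelay (L : ℕ → ((ℕ → X) →ₗ[ℝ] X)) (d : ℕ) : Prop :=
  ∀ n : ℕ, ∃ A : Fin d → (X →L[ℝ] X), ∀ φ : ℕ → X, L n φ = ∑ k : Fin d, A k (φ k)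

/-! ### Auxiliary lemmas -/

lemma wnorm_nonneg (γ : ℝ) (φ : ℕ → X) (k : ℕ) : 0 ≤ wnorm γ φ k :=
  mul_nonneg (norm_nonneg _) (Real.exp_nonneg _)

lemma Bnorm_nonneg (γ : ℝ) (φ : ℕ → X) : 0 ≤ Bnorm γ φ :=
  Real.iSup_nonneg (wnorm_nonneg γ φ)

lemma le_Bnorm {γ : ℝ} {φ : ℕ → X} (h : MemB γ φ) (k : ℕ) : wnorm γ φ k ≤ Bnorm γ φ :=
  le_ciSup h k

lemma Bnorm_le {γ : ℝ} {φ : ℕ → X} {M : ℝ} (h : ∀ k, wnorm γ φ k ≤ M) : Bnorm γ φ ≤ M :=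
  ciSup_le h

/-- values of a solution in the past of `τ`. -/
lemma sol_past {L : ℕ → ((ℕ → X) →ₗ[ℝ] X)} {f : ℕ → X} {τ : ℕ} {φ : ℕ → X} {x : ℤ → X}
    (hsol : IsSolution L f τ φ x) {n k : ℕ} (hn : τ ≤ n) (hk : n - τ ≤ k) :
    x ((n : ℤ) - k) = φ (k - (n - τ)) := by
  have h1 := hsol.1 (k - (n - τ))
  rw [← h1]; congr 1; omega

/-- histories of a solution belong to the phase space. -/
lemma hist_memB {γ : ℝ} (hγ : 0 < γ) {L : ℕ → ((ℕ → X) →ₗ[ℝ] X)} {f : ℕ → X}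
    {τ : ℕ} {φ : ℕ → X} {x : ℤ → X}
    (hsol : IsSolution L f τ φ x) (hφ : MemB γ φ) {n : ℕ} (hn : τ ≤ n) :
    MemB γ (hist x (n : ℤ)) := by
  have hne : (Finset.range (n - τ + 1)).Nonempty := ⟨0, by simp⟩
  refine ⟨max ((Finset.range (n - τ + 1)).sup' hne (fun i => ‖x ((n : ℤ) - i)‖))
    (Bnorm γ φ), ?_⟩
  rintro - ⟨k, rfl⟩
  by_cases hk : k ≤ n - τ
  · refine le_trans ?_ (le_max_left _ _)
    have h1 : wnorm γ (hist x (n : ℤ)) k ≤ ‖x ((n : ℤ) - k)‖ := by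
      have hexp : Real.exp (-(γ * k)) ≤ 1 :=
        Real.exp_le_one_iff.mpr (neg_nonpos.mpr (by positivity))
      exact mul_le_of_le_one_right (norm_nonneg _) hexp
    exact h1.trans (Finset.le_sup' (f := fun i : ℕ => ‖x ((n : ℤ) - (i : ℕ))‖)
      (Finset.mem_range.mpr (show k < n - τ + 1 by omega)))
  · refine le_trans ?_ (le_max_right _ _)
    have hx : x ((n : ℤ) - k) = φ (k - (n - τ)) := sol_past hsol hn (by omega)
    have h2 : wnorm γ (hist x (n : ℤ)) k ≤ wnorm γ φ (k - (n - τ)) := by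
      unfold wnorm hist
      rw [hx]
      apply mul_le_mul_of_nonneg_left _ (norm_nonneg _)
      apply Real.exp_le_exp.mpr
      have : ((k - (n - τ) : ℕ) : ℝ) ≤ (k : ℝ) := by
        exact_mod_cast Nat.sub_le _ _
      nlinarith
    exact h2.trans (le_Bnorm hφ _)

/-- UES in `X` implies UES in `B^γ` (with exponent `min ν γ`). -/
lemma UESinB_of_UESinX {γ : ℝ} (hγ : 0 < γ) {L : ℕ → ((ℕ → X) →ₗ[ℝ] X)}
    (h : UESinX γ L) : UESinB γ L := by
  obtain ⟨K, hK, ν, hν, h⟩ := h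
  refine ⟨K, hK, min ν γ, lt_min hν hγ, ?_⟩
  intro τ φ hφ x hsol n hn
  have hK0 : (0 : ℝ) ≤ K := le_trans zero_le_one hK
  have hB0 : (0 : ℝ) ≤ Bnorm γ φ := Bnorm_nonneg γ φ
  set μ := min ν γ with hμ
  apply Bnorm_le
  intro k
  by_cases hk : k ≤ n - τ
  · -- within the interval [τ, n]
    set m := n - k with hm
    have hmτ : τ ≤ m := by omega
    have hxm : ((n : ℤ) - k) = ((m : ℕ) : ℤ) := by omega
    have hxb := h τ φ hφ x hsol m hmτ
    have hmr : (m : ℝ) = (n : ℝ) - (k : ℝ) := by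
      rw [hm, Nat.cast_sub (show k ≤ n by omega)]
    calc wnorm γ (hist x (n : ℤ)) k = ‖x ((m : ℕ) : ℤ)‖ * Real.exp (-(γ * k)) := by
          unfold wnorm hist; rw [hxm]
      _ ≤ (K * Real.exp (-(ν * ((m : ℝ) - (τ : ℝ)))) * Bnorm γ φ) * Real.exp (-(γ * k)) := by
          gcongr
      _ = K * Real.exp (-(ν * ((m : ℝ) - (τ : ℝ))) + -(γ * k)) * Bnorm γ φ := by
          rw [Real.exp_add]; ring
      _ ≤ K * Real.exp (-(μ * ((n : ℝ) - (τ : ℝ)))) * Bnorm γ φ := by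
          have hexp : Real.exp (-(ν * ((m : ℝ) - (τ : ℝ))) + -(γ * k))
              ≤ Real.exp (-(μ * ((n : ℝ) - (τ : ℝ)))) := by
            apply Real.exp_le_exp.mpr
            have h1 : μ ≤ ν := min_le_left _ _
            have h2 : μ ≤ γ := min_le_right _ _
            have h3 : (0 : ℝ) ≤ (m : ℝ) - (τ : ℝ) := by
              have : (τ : ℝ) ≤ (m : ℝ) := by exact_mod_cast hmτ
              linarith
            have h4 : (0 : ℝ) ≤ (k : ℝ) := Nat.cast_nonneg k
            nlinarith [hmr]
          exact mul_le_mul_of_nonneg_right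
            (mul_le_mul_of_nonneg_left hexp hK0) hB0
  · -- in the past
    have hx : x ((n : ℤ) - k) = φ (k - (n - τ)) := sol_past hsol hn (by omega)
    set k' := k - (n - τ) with hk'
    have hkr : (k : ℝ) = (k' : ℝ) + ((n : ℝ) - (τ : ℝ)) := by
      have hk1 : k = k' + (n - τ) := by omega
      rw [hk1, Nat.cast_add, Nat.cast_sub hn]
    calc wnorm γ (hist x (n : ℤ)) k = ‖φ k'‖ * Real.exp (-(γ * k)) := by
          unfold wnorm hist; rw [hx]
      _ = (‖φ k'‖ * Real.exp (-(γ * k'))) * Real.exp (-(γ * ((n : ℝ) - (τ : ℝ)))) := by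
          rw [mul_assoc, ← Real.exp_add]; rw [hkr]; ring_nf
      _ ≤ Bnorm γ φ * Real.exp (-(γ * ((n : ℝ) - (τ : ℝ)))) := by
          gcongr
          exact le_Bnorm hφ k'
      _ ≤ Bnorm γ φ * Real.exp (-(μ * ((n : ℝ) - (τ : ℝ)))) := by
          apply mul_le_mul_of_nonneg_left _ hB0
          apply Real.exp_le_exp.mpr
          have h2 : μ ≤ γ := min_le_right _ _
          have h3 : (0 : ℝ) ≤ (n : ℝ) - (τ : ℝ) := by
            have : (τ : ℝ) ≤ (n : ℝ) := by exact_mod_cast hn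
            linarith
          nlinarith
      _ ≤ K * Real.exp (-(μ * ((n : ℝ) - (τ : ℝ)))) * Bnorm γ φ := by
          nlinarith [mul_nonneg (mul_nonneg (sub_nonneg.mpr hK)
            (Real.exp_nonneg (-(μ * ((n : ℝ) - (τ : ℝ)))))) hB0]

/-- UES in `B^γ` implies UES in `X`. -/
lemma UESinX_of_UESinB {γ : ℝ} (hγ : 0 < γ) {L : ℕ → ((ℕ → X) →ₗ[ℝ] X)}
    (h : UESinB γ L) : UESinX γ L := by
  obtain ⟨K, hK, ν, hν, h⟩ := h
  refine ⟨K, hK, ν, hν, ?_⟩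
  intro τ φ hφ x hsol n hn
  have hmem := hist_memB hγ hsol hφ hn
  have h0 : ‖x (n : ℤ)‖ = wnorm γ (hist x (n : ℤ)) 0 := by
    unfold wnorm hist; simp
  rw [h0]
  exact (le_Bnorm hmem 0).trans (h τ φ hφ x hsol n hn)

/-- The key pointwise description of `Dop`. -/
lemma Dop_apply (L : ℕ → ((ℕ → X) →ₗ[ℝ] X)) (n : ℕ) (ψ : ℕ → X) (k : ℕ) :
    Dop L n ψ k = (if k = 0 then L n ψ else 0) + (if k = 0 then 0 else ψ (k - 1)) := by
  simp only [Dop, LinearMap.add_apply, LinearMap.comp_apply, Ecoord, shiftS,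
    LinearMap.coe_mk, AddHom.coe_mk]
  rfl

/-- histories of a solution give a solution of the first order system. -/
lemma hist_isFOSol {L : ℕ → ((ℕ → X) →ₗ[ℝ] X)} {τ : ℕ} {φ : ℕ → X} {x : ℤ → X}
    (hsol : IsSolution L 0 τ φ x) :
    IsFOSol (fun n => Dop L n) τ φ (fun n => hist x (n : ℤ)) := by
  constructor
  · funext k
    exact hsol.1 k
  · intro n hn
    funext k
    rw [Dop_apply]
    by_cases hk : k = 0
    · subst hk
      have hstep := hsol.2 n hn
      simp only [Pi.zero_apply, add_zero] at hstep
      simp only [if_pos rfl, add_zero, hist]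
      rw [← hstep]
      simp only [if_true, add_zero]
      congr 1
    · simp only [if_neg hk, zero_add, hist]
      congr 1
      omega

/-- FOUES implies UESinB. -/
lemma UESinB_of_FOUES {γ : ℝ} {L : ℕ → ((ℕ → X) →ₗ[ℝ] X)}
    (h : FOUES γ (fun n => Dop L n)) : UESinB γ L := by
  obtain ⟨K, hK, ν, hν, h⟩ := h
  refine ⟨K, hK, ν, hν, ?_⟩
  intro τ φ hφ x hsol n hn
  exact h τ φ hφ _ (hist_isFOSol hsol) n hn

/-- Construction of the solution of the delay system with initial history `ψ` at `τ`:
`vsol L τ ψ j` is the value at time `τ + j`. -/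
def vsol (L : ℕ → ((ℕ → X) →ₗ[ℝ] X)) (τ : ℕ) (ψ : ℕ → X) : ℕ → X
  | 0 => ψ 0
  | (j + 1) => L (τ + j) (fun k => if k ≤ j then vsol L τ ψ (j - k) else ψ (k - j))
  termination_by j => j
  decreasing_by omega

/-- The solution of the delay system as a function on `ℤ`. -/
noncomputable def xsol (L : ℕ → ((ℕ → X) →ₗ[ℝ] X)) (τ : ℕ) (ψ : ℕ → X) : ℤ → X :=
  fun m => if 0 ≤ m - (τ : ℤ) then vsol L τ ψ (m - (τ : ℤ)).toNat
           else ψ ((τ : ℤ) - m).toNat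

lemma xsol_past (L : ℕ → ((ℕ → X) →ₗ[ℝ] X)) (τ : ℕ) (ψ : ℕ → X) (k : ℕ) :
    xsol L τ ψ ((τ : ℤ) - k) = ψ k := by
  unfold xsol
  by_cases hk : k = 0
  · subst hk
    simp [vsol]
  · rw [if_neg (by omega)]
    congr 1; omega

lemma hist_xsol (L : ℕ → ((ℕ → X) →ₗ[ℝ] X)) (τ : ℕ) (ψ : ℕ → X) {n : ℕ} (hn : τ ≤ n) :
    hist (xsol L τ ψ) (n : ℤ)
      = fun k => if k ≤ n - τ then vsol L τ ψ (n - τ - k) else ψ (k - (n - τ)) := by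
  funext k
  unfold hist xsol
  by_cases hk : k ≤ n - τ
  · rw [if_pos (by omega), if_pos hk]
    congr 1; omega
  · rw [if_neg (by omega), if_neg hk]
    congr 1; omega

lemma xsol_step (L : ℕ → ((ℕ → X) →ₗ[ℝ] X)) (τ : ℕ) (ψ : ℕ → X) {n : ℕ} (hn : τ ≤ n) :
    xsol L τ ψ ((n : ℤ) + 1) = L n (hist (xsol L τ ψ) (n : ℤ)) := by
  have h1 : xsol L τ ψ ((n : ℤ) + 1) = vsol L τ ψ ((n - τ) + 1) := by
    unfold xsol
    rw [if_pos (by omega)]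
    congr 1; omega
  rw [h1, vsol, hist_xsol L τ ψ hn]
  have : τ + (n - τ) = n := by omega
  rw [this]

lemma xsol_isSolution (L : ℕ → ((ℕ → X) →ₗ[ℝ] X)) (τ : ℕ) (ψ : ℕ → X) :
    IsSolution L 0 τ ψ (xsol L τ ψ) := by
  constructor
  · exact xsol_past L τ ψ
  · intro n hn
    rw [xsol_step L τ ψ hn]
    simp

lemma fosol_eq_hist {L : ℕ → ((ℕ → X) →ₗ[ℝ] X)} {τ : ℕ} {ψ : ℕ → X} {z : ℕ → (ℕ → X)}
    (hz : IsFOSol (fun n => Dop L n) τ ψ z) {n : ℕ} (hn : τ ≤ n) :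
    z n = hist (xsol L τ ψ) (n : ℤ) := by
  induction n, hn using Nat.le_induction with
  | base =>
    rw [hz.1]
    funext k
    exact (xsol_past L τ ψ k).symm
  | succ n hn ih =>
    rw [hz.2 n hn, ih]
    have h := (hist_isFOSol (xsol_isSolution L τ ψ)).2 n hn
    simpa using h.symm

/-- UESinB implies FOUES. -/
lemma FOUES_of_UESinB {γ : ℝ} {L : ℕ → ((ℕ → X) →ₗ[ℝ] X)}
    (h : UESinB γ L) : FOUES γ (fun n => Dop L n) := by
  obtain ⟨K, hK, ν, hν, h⟩ := h
  refine ⟨K, hK, ν, hν, ?_⟩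
  intro τ ψ hψ z hz n hn
  rw [fosol_eq_hist hz hn]
  exact h τ ψ hψ _ (xsol_isSolution L τ ψ) n hn

/-- Proposition 3.11: for `γ > 0`, UES in `X` w.r.t. `B^γ` ⟺ UES in `B^γ`
⟺ UES of the first order system `y(n+1) = D(n)y(n)` in `B^γ`. -/
theorem statement12 (γ : ℝ) (hγ : 0 < γ) (L : ℕ → ((ℕ → X) →ₗ[ℝ] X))
    (hL : ∀ n, OpBounded γ (L n)) :
    (UESinX γ L ↔ UESinB γ L) ∧
    (UESinX γ L ↔ FOUES γ (fun n => Dop L n)) := by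
  constructor
  · exact ⟨UESinB_of_UESinX hγ, UESinX_of_UESinB hγ⟩
  · exact ⟨fun h => FOUES_of_UESinB (UESinB_of_UESinX hγ h),
      fun h => UESinX_of_UESinB hγ (UESinB_of_FOUES h)⟩

end BP
end

section
/- Let γ ∈ ℝ, 1 ≤ p, q ≤ ∞, and let L(n) : B^γ → X (n ≥ 0) be bounded linear operators defining the system x(n+1) = L(n)x_n + f(n). Assume the nonhomogeneous system is (ℓ^p,ℓ^q)-stable and let K ≥ 1 be a constant with ‖x(·,0,0_B;f)‖_{ℓ^q} ≤ K ‖f‖_{ℓ^p} for all f ∈ ℓ^p(ℤ≥0, X). Then for every k ≥ 0 and every n ≥ k+1, the operator L(n,k) satisfies ‖L(n,k)‖_{X→X} ≤ 2^k K^{k+1}. -/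
open scoped ENNReal
open MeasureTheory

namespace BP

variable {X : Type*} [NormedAddCommGroup X] [NormedSpace ℝ X] [CompleteSpace X]

section Aux

set_option linter.unusedSectionVars false

lemma lpNorm_delta' (p : ℝ≥0∞) (hp : p ≠ 0) (m : ℕ) (ψ : X) :
    lpNorm p (fun j => if j = m then ψ else 0) = ENNReal.ofReal ‖ψ‖ := by
  have h : (fun j => if j = m then ψ else 0) = Set.indicator {m} (fun _ => ψ) := by
    funext j; by_cases hj : j = m <;> simp [hj]
  rw [lpNorm, h, eLpNorm_indicator_const' (measurableSet_singleton m)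
      (by simp [Measure.count_singleton]) hp,
    Measure.count_singleton, ENNReal.one_rpow, mul_one, ofReal_norm]

lemma norm_le_lpNorm' (q : ℝ≥0∞) (hq : q ≠ 0) (g : ℕ → X) (j : ℕ) :
    ENNReal.ofReal ‖g j‖ ≤ lpNorm q g := by
  rw [← lpNorm_delta' q hq j (g j)]
  apply eLpNorm_mono
  intro i; by_cases h : i = j <;> simp [h]

noncomputable def sol (L : ℕ → ((ℕ → X) →ₗ[ℝ] X)) (f : ℕ → X) : ℕ → (ℕ → X)
  | 0 => fun _ => 0
  | n + 1 => fun k => if k = 0 then L n (sol L f n) + f n else sol L f n (k - 1)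

noncomputable def solZ (L : ℕ → ((ℕ → X) →ₗ[ℝ] X)) (f : ℕ → X) : ℤ → X :=
  fun z => if 0 ≤ z then sol L f z.toNat 0 else 0

lemma sol_eq_solZ (L : ℕ → ((ℕ → X) →ₗ[ℝ] X)) (f : ℕ → X) :
    ∀ n k : ℕ, sol L f n k = solZ L f ((n : ℤ) - k) := by
  intro n
  induction n with
  | zero =>
    intro k
    rcases Nat.eq_zero_or_pos k with hk | hk
    · subst hk; simp [sol, solZ]
    · simp only [solZ, sol]
      rw [if_neg (by omega)]
  | succ n ih =>
    intro k
    rcases Nat.eq_zero_or_pos k with hk | hk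
    · subst hk
      simp only [solZ, Nat.cast_zero, sub_zero]
      rw [if_pos (by positivity)]
      norm_num
    · obtain ⟨j, rfl⟩ : ∃ j, k = j + 1 := ⟨k - 1, by omega⟩
      have h : sol L f (n + 1) (j + 1) = sol L f n j := by simp [sol]
      rw [h, ih j]
      congr 1
      push_cast; ring

lemma hist_solZ (L : ℕ → ((ℕ → X) →ₗ[ℝ] X)) (f : ℕ → X) (n : ℕ) :
    hist (solZ L f) (n : ℤ) = sol L f n := by
  funext k; exact (sol_eq_solZ L f n k).symm

lemma isSolution_solZ (L : ℕ → ((ℕ → X) →ₗ[ℝ] X)) (f : ℕ → X) :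
    IsSolution L f 0 0 (solZ L f) := by
  constructor
  · intro k
    have := (sol_eq_solZ L f 0 k).symm
    simpa [sol] using this
  · intro n _
    have h1 : ((n : ℤ) + 1) = ((n + 1 : ℕ) : ℤ) - ((0 : ℕ) : ℤ) := by push_cast; ring
    rw [h1, ← sol_eq_solZ L f (n + 1) 0, hist_solZ]
    simp [sol]

lemma sol_vanish (L : ℕ → ((ℕ → X) →ₗ[ℝ] X)) (f : ℕ → X) (m : ℕ)
    (hf : ∀ j < m, f j = 0) : ∀ j ≤ m, sol L f j = fun _ => (0 : X) := by
  intro j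
  induction j with
  | zero => intro _; simp [sol]
  | succ j ih =>
    intro hj
    have h0 : sol L f j = fun _ => (0 : X) := ih (by omega)
    have hz : sol L f j = (0 : ℕ → X) := by funext k; rw [h0]; rfl
    funext k
    rcases Nat.eq_zero_or_pos k with hk | hk
    · subst hk
      simp only [sol, if_pos rfl, hz, map_zero, hf j (by omega), add_zero]
      rfl
    · simp only [sol, if_neg (by omega : ¬ k = 0), h0]

end Aux

/-- Proposition 3.12 (i): under `(ℓ^p,ℓ^q)`-stability with constant `K`,
`‖L(n,k)‖_{X→X} ≤ 2^k K^(k+1)` for all `k ≥ 0`, `n ≥ k + 1`. -/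
theorem statement14 (γ : ℝ) (p q : ℝ≥0∞) (hp : 1 ≤ p) (hq : 1 ≤ q)
    (L : ℕ → ((ℕ → X) →ₗ[ℝ] X)) (hL : ∀ n, OpBounded γ (L n))
    (hst : lplqStable L p q) (K : ℝ) (hK : 1 ≤ K)
    (hbd : ∀ f : ℕ → X, lpNorm p f < ∞ → ∀ x : ℤ → X, IsSolution L f 0 0 x →
      lpNorm q (restrict x) ≤ ENNReal.ofReal K * lpNorm p f) :
    ∀ k n : ℕ, k + 1 ≤ n → ∀ ψ : X,
      ‖L n (Ecoord k ψ)‖ ≤ 2 ^ k * K ^ (k + 1) * ‖ψ‖ := by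
  have hp0 : p ≠ 0 := (lt_of_lt_of_le zero_lt_one hp).ne'
  have hq0 : q ≠ 0 := (lt_of_lt_of_le zero_lt_one hq).ne'
  have hK0 : (0 : ℝ) ≤ K := le_trans zero_le_one hK
  intro k
  induction k using Nat.strong_induction_on with
  | _ k IH =>
    intro n hn ψ
    set m : ℕ := n - (k + 1) with hm
    have hnm : n = m + (k + 1) := by omega
    set f : ℕ → X := fun j => if j = m then ψ else 0 with hf
    have hfp : lpNorm p f = ENNReal.ofReal ‖ψ‖ := lpNorm_delta' p hp0 m ψ
    have hfin : lpNorm p f < ∞ := by rw [hfp]; exact ENNReal.ofReal_lt_top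
    have hsol := isSolution_solZ L f
    have hxb := hbd f hfin (solZ L f) hsol
    have hpt : ∀ j : ℕ, ‖solZ L f (j : ℤ)‖ ≤ K * ‖ψ‖ := by
      intro j
      have h1 : ENNReal.ofReal ‖restrict (solZ L f) j‖ ≤ lpNorm q (restrict (solZ L f)) :=
        norm_le_lpNorm' q hq0 (restrict (solZ L f)) j
      have h2 : lpNorm q (restrict (solZ L f)) ≤ ENNReal.ofReal (K * ‖ψ‖) := by
        calc lpNorm q (restrict (solZ L f)) ≤ ENNReal.ofReal K * lpNorm p f := hxb
          _ = ENNReal.ofReal (K * ‖ψ‖) := by rw [hfp, ← ENNReal.ofReal_mul hK0]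
      have h3 := le_trans h1 h2
      exact (ENNReal.ofReal_le_ofReal_iff (mul_nonneg hK0 (norm_nonneg _))).mp h3
    have hvanish : ∀ j ≤ m, sol L f j = fun _ => (0 : X) := by
      refine sol_vanish L f m ?_
      intro j hj
      simp only [hf]
      rw [if_neg (by omega)]
    have hsolm1 : ∀ k', sol L f (m + 1) k' = if k' = 0 then ψ else 0 := by
      intro k'
      rcases Nat.eq_zero_or_pos k' with hk' | hk'
      · subst hk'
        have hz : sol L f m = (0 : ℕ → X) := by
          funext k''; rw [hvanish m le_rfl]; rfl
        simp only [sol, if_pos rfl, hz, map_zero, zero_add, hf]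
        simp [show sol L (fun j => if j = m then ψ else 0) m = 0 from hz]
      · simp only [sol, if_neg (by omega : ¬ k' = 0)]
        rw [hvanish m le_rfl]
    have hcoord_le : ∀ j ≤ m, solZ L f (j : ℤ) = 0 := by
      intro j hj
      have h1 := sol_eq_solZ L f j 0
      simp only [Nat.cast_zero, sub_zero] at h1
      rw [← h1, hvanish j hj]
    have hcoord_hi : ∀ k', k < k' → sol L f n k' = 0 := by
      intro k' hk'
      rw [sol_eq_solZ]
      by_cases h : k' ≤ n
      · have h2 : ((n : ℤ) - k') = ((n - k' : ℕ) : ℤ) := by push_cast; omega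
        rw [h2]
        exact hcoord_le (n - k') (by omega)
      · simp only [solZ]
        rw [if_neg (by push_cast; omega)]
    have hk_coord : sol L f n k = ψ := by
      rw [sol_eq_solZ]
      have h2 : ((n : ℤ) - k) = ((m + 1 : ℕ) : ℤ) := by push_cast; omega
      rw [h2]
      have h3 := sol_eq_solZ L f (m + 1) 0
      simp only [Nat.cast_zero, sub_zero] at h3
      rw [← h3, hsolm1 0, if_pos rfl]
    have hdecomp : sol L f n
        = Ecoord k ψ + ∑ j ∈ Finset.range k, Ecoord j (solZ L f ((n : ℤ) - j)) := by
      funext k'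
      have hsum : (∑ j ∈ Finset.range k, Ecoord j (solZ L f ((n : ℤ) - j))) k'
          = ∑ j ∈ Finset.range k, (if k' = j then solZ L f ((n : ℤ) - j) else 0) := by
        rw [Finset.sum_apply]
        rfl
      have hadd : (Ecoord k ψ + ∑ j ∈ Finset.range k, Ecoord j (solZ L f ((n : ℤ) - j))) k'
          = (if k' = k then ψ else 0)
            + ∑ j ∈ Finset.range k, (if k' = j then solZ L f ((n : ℤ) - j) else 0) := by
        rw [Pi.add_apply, hsum]; rfl
      rw [hadd, Finset.sum_ite_eq]
      rcases lt_trichotomy k' k with h | h | h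
      · rw [sol_eq_solZ]
        rw [if_neg (by omega), if_pos (Finset.mem_range.mpr h), zero_add]
      · subst h
        rw [hk_coord, if_pos rfl, if_neg (by simp), add_zero]
      · rw [hcoord_hi k' h, if_neg (by omega), if_neg (by simp; omega), add_zero]
    have hxn1 : L n (sol L f n) = solZ L f ((n : ℤ) + 1) := by
      have h1 := hsol.2 n (Nat.zero_le n)
      rw [hist_solZ] at h1
      have hfn : f n = 0 := by simp only [hf]; rw [if_neg (by omega)]
      rw [hfn, add_zero] at h1
      exact h1.symm
    have hmain : L n (Ecoord k ψ)
        = solZ L f ((n : ℤ) + 1)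
          - ∑ j ∈ Finset.range k, L n (Ecoord j (solZ L f ((n : ℤ) - j))) := by
      rw [← hxn1, hdecomp, map_add, map_sum]
      abel
    have hnψ : (0 : ℝ) ≤ ‖ψ‖ := norm_nonneg ψ
    have hterm : ∀ j ∈ Finset.range k,
        ‖L n (Ecoord j (solZ L f ((n : ℤ) - j)))‖ ≤ 2 ^ j * (K ^ (k + 1) * ‖ψ‖) := by
      intro j hj
      have hjk : j < k := Finset.mem_range.mp hj
      have hcast : ((n : ℤ) - j) = ((n - j : ℕ) : ℤ) := by push_cast; omega
      have hIH := IH j hjk n (by omega) (solZ L f ((n : ℤ) - j))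
      have hval : ‖solZ L f ((n : ℤ) - j)‖ ≤ K * ‖ψ‖ := by
        rw [hcast]; exact hpt (n - j)
      calc ‖L n (Ecoord j (solZ L f ((n : ℤ) - j)))‖
          ≤ 2 ^ j * K ^ (j + 1) * ‖solZ L f ((n : ℤ) - j)‖ := hIH
        _ ≤ 2 ^ j * K ^ (j + 1) * (K * ‖ψ‖) := by
            apply mul_le_mul_of_nonneg_left hval
            positivity
        _ = 2 ^ j * (K ^ (j + 2) * ‖ψ‖) := by ring
        _ ≤ 2 ^ j * (K ^ (k + 1) * ‖ψ‖) := by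
            have : K ^ (j + 2) ≤ K ^ (k + 1) := pow_le_pow_right₀ hK (by omega)
            gcongr
    have hA : ‖solZ L f ((n : ℤ) + 1)‖ ≤ K * ‖ψ‖ := by
      have hc : ((n : ℤ) + 1) = ((n + 1 : ℕ) : ℤ) := by push_cast; ring
      rw [hc]; exact hpt (n + 1)
    have hKpow : K ≤ K ^ (k + 1) := by
      calc K = K ^ 1 := (pow_one K).symm
        _ ≤ K ^ (k + 1) := pow_le_pow_right₀ hK (by omega)
    have hgeom : ∑ j ∈ Finset.range k, (2 : ℝ) ^ j = 2 ^ k - 1 := by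
      have := geom_sum_eq (by norm_num : (2 : ℝ) ≠ 1) k
      rw [this]; norm_num
    calc ‖L n (Ecoord k ψ)‖
        ≤ ‖solZ L f ((n : ℤ) + 1)‖
          + ‖∑ j ∈ Finset.range k, L n (Ecoord j (solZ L f ((n : ℤ) - j)))‖ := by
          rw [hmain]; exact norm_sub_le _ _
      _ ≤ K * ‖ψ‖ + ∑ j ∈ Finset.range k, ‖L n (Ecoord j (solZ L f ((n : ℤ) - j)))‖ :=
          add_le_add hA (norm_sum_le _ _)
      _ ≤ K * ‖ψ‖ + ∑ j ∈ Finset.range k, 2 ^ j * (K ^ (k + 1) * ‖ψ‖) :=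
          add_le_add le_rfl (Finset.sum_le_sum hterm)
      _ = K * ‖ψ‖ + (2 ^ k - 1) * (K ^ (k + 1) * ‖ψ‖) := by
          rw [← Finset.sum_mul, hgeom]
      _ ≤ 2 ^ k * K ^ (k + 1) * ‖ψ‖ := by
          nlinarith [mul_le_mul_of_nonneg_right hKpow hnψ]


end BP
end

section
/- Let γ ∈ ℝ, 1 ≤ p, q ≤ ∞, and let L(n) : B^γ → X (n ≥ 0) be bounded linear operators. Then the nonhomogeneous system x(n+1) = L(n)x_n + f(n) is (ℓ^p,ℓ^q)-stable if and only if the associated subdiagonal system, defined by the operators L_sub(n), is (ℓ^p,ℓ^q)-stable. -/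
open scoped ENNReal
open MeasureTheory

namespace BP

variable {X : Type*} [NormedAddCommGroup X] [NormedSpace ℝ X] [CompleteSpace X]

/-- Proposition 5.5: the system is `(ℓ^p,ℓ^q)`-stable iff the associated
subdiagonal system is `(ℓ^p,ℓ^q)`-stable. -/
theorem statement17 (γ : ℝ) (p q : ℝ≥0∞) (hp : 1 ≤ p) (hq : 1 ≤ q)
    (L : ℕ → ((ℕ → X) →ₗ[ℝ] X)) (hL : ∀ n, OpBounded γ (L n)) :
    lplqStable L p q ↔ lplqStable (Lsub L) p q := by
  have key : ∀ (x : ℤ → X), (∀ k : ℕ, x ((0:ℤ) - k) = 0) →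
      ∀ n : ℕ, L n (hist x (n : ℤ)) = Lsub L n (hist x (n : ℤ)) := by
    intro x h0 n
    rcases Nat.eq_zero_or_pos n with rfl | hn
    · have hz : hist x (0:ℤ) = 0 := funext fun k => h0 k
      simp [Lsub, Nat.cast_zero, hz]
    · have hne : n ≠ 0 := hn.ne'
      have hph : Phead (n - 1) (hist x (n : ℤ)) = hist x (n : ℤ) := by
        funext k
        simp only [Phead, LinearMap.coe_mk, AddHom.coe_mk]
        split_ifs with h
        · rfl
        · push_neg at h
          have hk : n ≤ k := by omega
          have hcast : ((n:ℤ) - k) = (0:ℤ) - ((k - n : ℕ) : ℤ) := by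
            push_cast [Nat.cast_sub hk]; ring
          have : x ((n:ℤ) - k) = 0 := by rw [hcast]; exact h0 (k - n)
          exact (this).symm
      simp [Lsub, hne, hph]
  have equiv : ∀ (f : ℕ → X) (x : ℤ → X),
      IsSolution L f 0 0 x ↔ IsSolution (Lsub L) f 0 0 x := by
    intro f x
    have h0 : IsSolution L f 0 0 x → ∀ k : ℕ, x ((0:ℤ) - k) = 0 := fun h k => h.1 k
    have h0' : IsSolution (Lsub L) f 0 0 x → ∀ k : ℕ, x ((0:ℤ) - k) = 0 := fun h k => h.1 k
    constructor
    · rintro ⟨h1, h2⟩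
      exact ⟨h1, fun n hn => by rw [h2 n hn, key x (fun k => h1 k) n]⟩
    · rintro ⟨h1, h2⟩
      exact ⟨h1, fun n hn => by rw [h2 n hn, ← key x (fun k => h1 k) n]⟩
  constructor
  · intro h f hf x hx
    exact h f hf x ((equiv f x).mpr hx)
  · intro h f hf x hx
    exact h f hf x ((equiv f x).mp hx)

end BP
end
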